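/- Let A, B, C, D be dephased complex Hadamard matrices of order N and let E₁, E₂, E₃ be diagonal unitary matrices of order N with (E_i)_{11} = 1 for i = 1,2,3. Then the 4N×4N block matrix [[A, E₁B, E₂C, E₃D], [A, −E₁B, E₂C, −E₃D], [A, E₁B, −E₂C, −E₃D], [A, −E₁B, −E₂C, E₃D]] is a dephased complex Hadamard matrix of order 4N. -/

import Mathlib

open Matrix

lemma doubling {n : Type*} [Fintype n] [DecidableEq n] (c : ℂ) (X Y : Matrix n n ℂ)
    (hX : ∀ i j, ‖X i j‖ = 1) (hY : ∀ i j, ‖Y i j‖ = 1)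
    (hX2 : X * X.conjTranspose = c • 1) (hY2 : Y * Y.conjTranspose = c • 1) :
    (∀ i j, ‖(fromBlocks X Y X (-Y)) i j‖ = 1) ∧
      (fromBlocks X Y X (-Y)) * (fromBlocks X Y X (-Y)).conjTranspose
        = (2 * c) • (1 : Matrix (n ⊕ n) (n ⊕ n) ℂ) := by
  constructor
  · rintro (i|i) (j|j) <;> simp [fromBlocks, hX, hY]
  · have h1 : c • (1 : Matrix n n ℂ) + c • 1 = (2 * c) • 1 := by module
    have h2 : c • (1 : Matrix n n ℂ) + -(c • 1) = 0 := by module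
    rw [show (1 : Matrix (n ⊕ n) (n ⊕ n) ℂ) = fromBlocks 1 0 0 1 from (fromBlocks_one).symm]
    rw [fromBlocks_conjTranspose, fromBlocks_multiply, fromBlocks_smul]
    simp only [Matrix.mul_neg, Matrix.neg_mul, conjTranspose_neg, neg_neg, hX2, hY2,
      smul_zero, h1, h2]

lemma diag_mul_had {n : Type*} [Fintype n] [DecidableEq n] (c : ℂ)
    (E B : Matrix n n ℂ) (d : n → ℂ) (hd : ∀ i, ‖d i‖ = 1)
    (hEd : E = Matrix.diagonal d)
    (hB : ∀ i j, ‖B i j‖ = 1) (hB2 : B * B.conjTranspose = c • 1) :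
    (∀ i j, ‖(E * B) i j‖ = 1) ∧
      (E * B) * (E * B).conjTranspose = c • 1 := by
  have key : ∀ i, d i * star (d i) = 1 := by
    intro i
    rw [Complex.star_def, Complex.mul_conj, Complex.normSq_eq_norm_sq, hd i]
    norm_num
  have hEU : E * E.conjTranspose = 1 := by
    rw [hEd, diagonal_conjTranspose, diagonal_mul_diagonal]
    ext i j
    simp only [Matrix.diagonal_apply, Matrix.one_apply, Pi.star_apply]
    split <;> simp [Complex.star_def] at key ⊢ <;> simp [key i]
  constructor
  · intro i j
    rw [hEd, diagonal_mul]
    simp [hd, hB]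
  · rw [conjTranspose_mul, show E * B * (B.conjTranspose * E.conjTranspose)
      = E * (B * B.conjTranspose) * E.conjTranspose by noncomm_ring, hB2]
    rw [Matrix.mul_smul, Matrix.mul_one, Matrix.smul_mul, hEU]



/-- A complex Hadamard matrix: all entries of modulus one, and `H * Hᴴ = N • 1`
where `N` is the cardinality of the index type. -/
def IsComplexHadamard {n : Type*} [Fintype n] [DecidableEq n] (H : Matrix n n ℂ) : Prop :=
  (∀ i j, ‖H i j‖ = 1) ∧
    H * H.conjTranspose = (Fintype.card n : ℂ) • (1 : Matrix n n ℂ)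

/-- Dephased w.r.t. the distinguished index `i0`. -/
def IsDephased {n : Type*} (H : Matrix n n ℂ) (i0 : n) : Prop :=
  (∀ j, H i0 j = 1) ∧ (∀ i, H i i0 = 1)

/-- A diagonal unitary matrix. -/
def IsDiagUnitary {n : Type*} [Fintype n] [DecidableEq n] (D : Matrix n n ℂ) : Prop :=
  ∃ d : n → ℂ, (∀ i, ‖d i‖ = 1) ∧ D = Matrix.diagonal d

/-- Williamson-type quadrupling: for dephased complex Hadamard
matrices `A, B, C, D` of order `N` and diagonal unitary matrices `E₁, E₂, E₃` with
`(E_i)₁₁ = 1`, the `4N × 4N` block matrix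
`[[A, E₁B, E₂C, E₃D], [A, −E₁B, E₂C, −E₃D], [A, E₁B, −E₂C, −E₃D], [A, −E₁B, −E₂C, E₃D]]`
is a dephased complex Hadamard matrix of order `4N`. -/
theorem quadrupling_construction (N : ℕ) (hN : 0 < N)
    (A B C D E₁ E₂ E₃ : Matrix (Fin N) (Fin N) ℂ)
    (hA : IsComplexHadamard A) (hB : IsComplexHadamard B)
    (hC : IsComplexHadamard C) (hD : IsComplexHadamard D)
    (hdA : IsDephased A ⟨0, hN⟩) (hdB : IsDephased B ⟨0, hN⟩)
    (hdC : IsDephased C ⟨0, hN⟩) (hdD : IsDephased D ⟨0, hN⟩)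
    (hE₁ : IsDiagUnitary E₁) (hE₂ : IsDiagUnitary E₂) (hE₃ : IsDiagUnitary E₃)
    (hE₁0 : E₁ ⟨0, hN⟩ ⟨0, hN⟩ = 1) (hE₂0 : E₂ ⟨0, hN⟩ ⟨0, hN⟩ = 1)
    (hE₃0 : E₃ ⟨0, hN⟩ ⟨0, hN⟩ = 1) :
    letI K : Matrix (Fin N ⊕ Fin N) (Fin N ⊕ Fin N) ℂ :=
      Matrix.fromBlocks A (E₁ * B) A (-(E₁ * B))
    letI L : Matrix (Fin N ⊕ Fin N) (Fin N ⊕ Fin N) ℂ :=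
      Matrix.fromBlocks (E₂ * C) (E₃ * D) (E₂ * C) (-(E₃ * D))
    IsComplexHadamard (Matrix.fromBlocks K L K (-L)) ∧
    Fintype.card ((Fin N ⊕ Fin N) ⊕ (Fin N ⊕ Fin N)) = 4 * N ∧
    IsDephased (Matrix.fromBlocks K L K (-L)) (Sum.inl (Sum.inl ⟨0, hN⟩)) := by
  obtain ⟨d₁, hd₁, hEd₁⟩ := hE₁
  obtain ⟨d₂, hd₂, hEd₂⟩ := hE₂
  obtain ⟨d₃, hd₃, hEd₃⟩ := hE₃
  have hA2 : A * A.conjTranspose = (N : ℂ) • 1 := by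
    simpa [Fintype.card_fin] using hA.2
  have hB2 : B * B.conjTranspose = (N : ℂ) • 1 := by
    simpa [Fintype.card_fin] using hB.2
  have hC2 : C * C.conjTranspose = (N : ℂ) • 1 := by
    simpa [Fintype.card_fin] using hC.2
  have hD2 : D * D.conjTranspose = (N : ℂ) • 1 := by
    simpa [Fintype.card_fin] using hD.2
  have hEB := diag_mul_had (N : ℂ) E₁ B d₁ hd₁ hEd₁ hB.1 hB2
  have hEC := diag_mul_had (N : ℂ) E₂ C d₂ hd₂ hEd₂ hC.1 hC2
  have hED := diag_mul_had (N : ℂ) E₃ D d₃ hd₃ hEd₃ hD.1 hD2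
  have hK := doubling (N : ℂ) A (E₁ * B) hA.1 hEB.1 hA2 hEB.2
  have hL := doubling (N : ℂ) (E₂ * C) (E₃ * D) hEC.1 hED.1 hEC.2 hED.2
  have hM := doubling (2 * (N : ℂ)) _ _ hK.1 hL.1 hK.2 hL.2
  have hcard : Fintype.card ((Fin N ⊕ Fin N) ⊕ (Fin N ⊕ Fin N)) = 4 * N := by
    simp [Fintype.card_sum, Fintype.card_fin]; ring
  refine ⟨⟨hM.1, ?_⟩, hcard, ?_, ?_⟩
  · rw [hM.2, hcard]
    congr 1
    push_cast
    ring
  · have hd₁0 : d₁ ⟨0, hN⟩ = 1 := by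
      rw [hEd₁] at hE₁0; simpa using hE₁0
    have hd₂0 : d₂ ⟨0, hN⟩ = 1 := by
      rw [hEd₂] at hE₂0; simpa using hE₂0
    have hd₃0 : d₃ ⟨0, hN⟩ = 1 := by
      rw [hEd₃] at hE₃0; simpa using hE₃0
    rintro ((j|j)|(j|j)) <;>
      simp [Matrix.fromBlocks, hEd₁, hEd₂, hEd₃, Matrix.diagonal_mul,
        hd₁0, hd₂0, hd₃0, hdA.1, hdB.1, hdC.1, hdD.1]
  · rintro ((i|i)|(i|i)) <;> simp [Matrix.fromBlocks, hdA.2]
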